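/- arXiv:1811.07856 — 3 statements merged into one kernel-verified Lean document; each statement's English description precedes it below -/
import Mathlib

section
/- A subset F ⊆ E ∪ A of a mixed graph is an inclusionwise minimal mixed edge cover if and only if it is an inclusionwise minimal mixed covering forest. -/
variable {V : Type*} [Fintype V] [DecidableEq V]

/-- Number of elements of `FE` covering `v` (an edge covers both its endpoints). -/
def edgeCoverCount (FE : Finset (Sym2 V)) (v : V) : ℕ :=
  (FE.filter (fun e => v ∈ e)).card

/-- Number of arcs of `FA` with head `v`. -/
def arcCoverCount (FA : Finset (V × V)) (v : V) : ℕ :=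
  (FA.filter (fun a => a.2 = v)).card

/-- The multiset of undirected edges underlying the edge set `FE` and arc set `FA`. -/
def underlyingEdges (FE : Finset (Sym2 V)) (FA : Finset (V × V)) : Multiset (Sym2 V) :=
  FE.val + FA.val.map (fun a => s(a.1, a.2))

/-- A multiset of undirected edges is acyclic (a forest) iff every nonempty sub-multiset
touches strictly more vertices than its number of edges. -/
def AcyclicEdgeMultiset (M : Multiset (Sym2 V)) : Prop :=
  ∀ S : Multiset (Sym2 V), S ≤ M → S ≠ 0 →
    Multiset.card S < (Finset.univ.filter (fun v : V => ∃ e ∈ S.toFinset, v ∈ e)).card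

/-- A matching forest: acyclic underlying undirected graph and every vertex covered at most
once (endpoints of edges and heads of arcs count as covered). -/
def IsMatchingForest (FE : Finset (Sym2 V)) (FA : Finset (V × V)) : Prop :=
  AcyclicEdgeMultiset (underlyingEdges FE FA) ∧
    ∀ v : V, edgeCoverCount FE v + arcCoverCount FA v ≤ 1

/-- Reachability by a directed path (possibly of length 0) using arcs of `B`. -/
def arcReach (B : Finset (V × V)) : V → V → Prop :=
  Relation.ReflTransGen (fun u v => (u, v) ∈ B)

/-- A branching: each vertex has in-degree at most one and there is no directed cycle. -/
def IsBranching (B : Finset (V × V)) : Prop :=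
  (∀ v : V, arcCoverCount B v ≤ 1) ∧ ∀ a ∈ B, ¬ arcReach B a.2 a.1

/-- The root set of a branching: vertices with in-degree zero. -/
def rootSet (B : Finset (V × V)) : Finset V :=
  Finset.univ.filter (fun v => arcCoverCount B v = 0)

/-- A matching: every vertex is covered by at most one edge. -/
def IsMatching (FE : Finset (Sym2 V)) : Prop := ∀ v : V, edgeCoverCount FE v ≤ 1

/-- The set of vertices covered by some edge of `FE`. -/
def edgeCovered (FE : Finset (Sym2 V)) : Finset V :=
  Finset.univ.filter (fun v => 0 < edgeCoverCount FE v)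

/-- A mixed edge cover: every vertex is reachable by a directed path (possibly trivial)
in the arc part from an endpoint of some edge of the edge part. -/
def IsMixedEdgeCover (FE : Finset (Sym2 V)) (FA : Finset (V × V)) : Prop :=
  ∀ v : V, ∃ u : V, (∃ e ∈ FE, u ∈ e) ∧ arcReach FA u v

/-- A mixed covering forest: acyclic underlying undirected graph and every vertex covered
at least once. -/
def IsMixedCoveringForest (FE : Finset (Sym2 V)) (FA : Finset (V × V)) : Prop :=
  AcyclicEdgeMultiset (underlyingEdges FE FA) ∧
    ∀ v : V, 1 ≤ edgeCoverCount FE v + arcCoverCount FA v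

/-- The mix-size ⟨F⟩ = |F ∩ E| + |F ∩ A| / 2. -/
def mixSize (FE : Finset (Sym2 V)) (FA : Finset (V × V)) : ℚ :=
  (FE.card : ℚ) + (FA.card : ℚ) / 2

/-! A mixed covering forest is a mixed edge cover: otherwise every vertex not reached from an
edge is the head of an arc whose tail is not reached either, and choosing one such arc into each
of these vertices gives as many edges as vertices, i.e. a cycle. Conversely every mixed edge cover
contains an acyclic one: rank the vertices by their arc distance from the edges, keep one arc into
each vertex from a vertex of smaller rank, and an inclusionwise minimal set of edges covering the
same vertices. Every nonempty part of this graph has a leaf (the head of its highest arc, or a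
vertex lying on only one of its edges), so it is a forest. Since subforests are forests and mixed
edge covers cover every vertex, the two minimality notions coincide. -/

section General

variable {α : Type*}

def reachWithin (r : α → α → Prop) (Y : Set α) : ℕ → Set α
  | 0 => Y
  | n + 1 => reachWithin r Y n ∪ {v | ∃ u ∈ reachWithin r Y n, r u v}

theorem exists_mem_reachWithin {r : α → α → Prop} {Y : Set α} {u v : α} (hu : u ∈ Y)
    (huv : Relation.ReflTransGen r u v) : ∃ n, v ∈ reachWithin r Y n := by
  induction huv with
  | refl => exact ⟨0, hu⟩
  | tail _ hstep ih =>
    obtain ⟨n, hn⟩ := ih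
    exact ⟨n + 1, Or.inr ⟨_, hn, hstep⟩⟩

/-- `rank v` is the length of a shortest `r`-path from `Y` to `v`, and `pred v` the vertex
before `v` on such a path. -/
theorem exists_rank_of_forall_reflTransGen {r : α → α → Prop} {Y : Set α}
    (h : ∀ v, ∃ u ∈ Y, Relation.ReflTransGen r u v) :
    ∃ rank : α → ℕ, ∃ pred : α → α, (∀ v, rank v = 0 ↔ v ∈ Y) ∧
      ∀ v, 0 < rank v → r (pred v) v ∧ rank (pred v) < rank v := by
  classical
  have hex : ∀ v, ∃ n, v ∈ reachWithin r Y n := fun v => by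
    obtain ⟨u, hu, huv⟩ := h v
    exact exists_mem_reachWithin hu huv
  have hpred : ∀ v, ∃ u, 0 < Nat.find (hex v) →
      r u v ∧ Nat.find (hex u) < Nat.find (hex v) := by
    intro v
    cases hm : Nat.find (hex v) with
    | zero => exact ⟨v, by omega⟩
    | succ m =>
      have hspec := Nat.find_spec (hex v)
      rw [hm] at hspec
      rcases hspec with hm' | ⟨u, hu, huv⟩
      · exact absurd hm' (Nat.find_min (hex v) (by omega))
      · exact ⟨u, fun _ => ⟨huv, (Nat.find_le hu).trans_lt (by omega)⟩⟩
  choose pred hpred using hpred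
  exact ⟨fun v => Nat.find (hex v), pred, fun v => Nat.find_eq_zero _, hpred⟩

theorem mem_underlyingEdges {FE : Finset (Sym2 α)} {FA : Finset (α × α)} {e : Sym2 α} :
    e ∈ underlyingEdges FE FA ↔ e ∈ FE ∨ ∃ a ∈ FA, s(a.1, a.2) = e := by
  simp [underlyingEdges]

theorem underlyingEdges_mono {FE FE' : Finset (Sym2 α)} {FA FA' : Finset (α × α)}
    (hE : FE' ⊆ FE) (hA : FA' ⊆ FA) : underlyingEdges FE' FA' ≤ underlyingEdges FE FA :=
  add_le_add (Finset.val_le_iff.2 hE) (Multiset.map_le_map (Finset.val_le_iff.2 hA))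

theorem one_le_coverCount_iff [DecidableEq α] {FE : Finset (Sym2 α)} {FA : Finset (α × α)}
    {v : α} :
    1 ≤ edgeCoverCount FE v + arcCoverCount FA v ↔
      (∃ e ∈ FE, v ∈ e) ∨ ∃ a ∈ FA, a.2 = v := by
  simp [edgeCoverCount, arcCoverCount, Nat.one_le_iff_ne_zero, Finset.filter_eq_empty_iff,
    imp_iff_not_or]

theorem IsMixedEdgeCover.one_le_coverCount [DecidableEq α] {FE : Finset (Sym2 α)}
    {FA : Finset (α × α)} (h : IsMixedEdgeCover FE FA) (v : α) :
    1 ≤ edgeCoverCount FE v + arcCoverCount FA v := by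
  obtain ⟨u, hu, huv⟩ := h v
  rcases Relation.ReflTransGen.cases_tail huv with rfl | ⟨w, -, hwv⟩
  · exact one_le_coverCount_iff.2 (Or.inl hu)
  · exact one_le_coverCount_iff.2 (Or.inr ⟨(w, v), hwv, rfl⟩)

theorem exists_edge_subcover_with_private_vertices (FE : Finset (Sym2 α)) :
    ∃ FE' ⊆ FE, (∀ v, (∃ e ∈ FE, v ∈ e) → ∃ e ∈ FE', v ∈ e) ∧
      ∀ e ∈ FE', ∃ v ∈ e, ∀ e' ∈ FE', v ∈ e' → e' = e := by
  classical
  obtain ⟨FE', hmem, hmin⟩ := Finset.exists_minimal (s := FE.powerset.filter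
    fun F => ∀ v, (∃ e ∈ FE, v ∈ e) → ∃ e ∈ F, v ∈ e)
    ⟨FE, Finset.mem_filter.2 ⟨Finset.mem_powerset_self FE, fun _ => id⟩⟩
  simp only [Finset.mem_filter, Finset.mem_powerset] at hmem hmin
  refine ⟨FE', hmem.1, hmem.2, fun e he => ?_⟩
  by_contra! hshared
  -- otherwise the smaller set `FE'.erase e` still covers every vertex
  have hcovers : ∀ v, (∃ e ∈ FE, v ∈ e) → ∃ e' ∈ FE'.erase e, v ∈ e' := by
    intro v hv
    obtain ⟨g, hg, hvg⟩ := hmem.2 v hv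
    by_cases hge : g = e
    · obtain ⟨e', he', hve', hne⟩ := hshared v (hge ▸ hvg)
      exact ⟨e', Finset.mem_erase.2 ⟨hne, he'⟩, hve'⟩
    · exact ⟨g, Finset.mem_erase.2 ⟨hge, hg⟩, hvg⟩
  have hsub := hmin ⟨(Finset.erase_subset e FE').trans hmem.1, hcovers⟩
    (Finset.erase_subset e FE')
  exact Finset.notMem_erase e FE' (hsub he)

theorem isMixedEdgeCover_of_rank {FE : Finset (Sym2 α)} {FA : Finset (α × α)}
    (rank : α → ℕ) (hzero : ∀ v, rank v = 0 → ∃ e ∈ FE, v ∈ e)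
    (hpos : ∀ v, 0 < rank v → ∃ u, (u, v) ∈ FA ∧ rank u < rank v) :
    IsMixedEdgeCover FE FA := by
  intro v
  induction h : rank v using Nat.strong_induction_on generalizing v with
  | _ n ih =>
  rcases Nat.eq_zero_or_pos n with rfl | hn
  · exact ⟨v, hzero v h, .refl⟩
  · obtain ⟨u, huv, hu⟩ := hpos v (h ▸ hn)
    obtain ⟨w, hw, hwu⟩ := ih _ (h ▸ hu) u rfl
    exact ⟨w, hw, hwu.tail huv⟩

end General

def incidentVertices (S : Multiset (Sym2 V)) : Finset V :=
  Finset.univ.filter (fun v : V => ∃ e ∈ S.toFinset, v ∈ e)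

theorem mem_incidentVertices {S : Multiset (Sym2 V)} {v : V} :
    v ∈ incidentVertices S ↔ ∃ e ∈ S, v ∈ e := by
  simp [incidentVertices]

theorem AcyclicEdgeMultiset.mono {M M' : Multiset (Sym2 V)} (h : AcyclicEdgeMultiset M)
    (hle : M' ≤ M) : AcyclicEdgeMultiset M' :=
  fun S hS => h S (hS.trans hle)

theorem acyclicEdgeMultiset_of_exists_leaf {M : Multiset (Sym2 V)} (hM : M.Nodup)
    (hloop : ∀ e ∈ M, ¬ e.IsDiag)
    (hleaf : ∀ S ≤ M, S ≠ 0 → ∃ e ∈ S, ∃ v ∈ e, ∀ e' ∈ S, v ∈ e' → e' = e) :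
    AcyclicEdgeMultiset M := by
  intro S hSM hS0
  change _ < (incidentVertices S).card
  induction S using Multiset.strongInductionOn with
  | _ S ih =>
  obtain ⟨e, he, v, hve, hv⟩ := hleaf S hSM hS0
  by_cases hS' : S.erase e = 0
  · obtain rfl : S = {e} := by rw [← Multiset.cons_erase he, hS']; rfl
    induction e using Sym2.inductionOn with | hf x y =>
    have hxy : x ≠ y := by simpa using hloop _ (Multiset.mem_of_le hSM he)
    have hpair : ({x, y} : Finset V) ⊆ incidentVertices {s(x, y)} := by
      intro w hw
      rw [Finset.mem_insert, Finset.mem_singleton] at hw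
      exact mem_incidentVertices.2 ⟨_, Multiset.mem_singleton_self _, by simpa using hw⟩
    have := Finset.card_le_card hpair
    rw [Finset.card_pair hxy] at this
    simp only [Multiset.card_singleton]
    omega
  · have hsub : incidentVertices (S.erase e) ⊆ (incidentVertices S).erase v := by
      intro w hw
      obtain ⟨e', he', hwe'⟩ := mem_incidentVertices.1 hw
      have he'S := Multiset.mem_of_mem_erase he'
      refine Finset.mem_erase.2 ⟨?_, mem_incidentVertices.2 ⟨e', he'S, hwe'⟩⟩
      rintro rfl
      obtain rfl := hv e' he'S hwe'
      exact (Multiset.nodup_of_le hSM hM).notMem_erase he'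
    have hlt := ih _ (Multiset.erase_lt.2 he) ((Multiset.erase_le e S).trans hSM) hS'
    have hle := Finset.card_le_card hsub
    rw [Finset.card_erase_of_mem (mem_incidentVertices.2 ⟨e, he, hve⟩)] at hle
    have := Multiset.card_erase_add_one he
    omega

theorem acyclicEdgeMultiset_underlyingEdges_of_rank {FE : Finset (Sym2 V)}
    {FA : Finset (V × V)} (rank : V → ℕ) (hloop : ∀ e ∈ FE, ¬ e.IsDiag)
    (hFE : ∀ e ∈ FE, ∀ v ∈ e, rank v = 0)
    (hprivate : ∀ e ∈ FE, ∃ v ∈ e, ∀ e' ∈ FE, v ∈ e' → e' = e)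
    (hFA : ∀ a ∈ FA, rank a.1 < rank a.2)
    (hhead : ∀ a ∈ FA, ∀ b ∈ FA, a.2 = b.2 → a = b) :
    AcyclicEdgeMultiset (underlyingEdges FE FA) := by
  have hnodup : (underlyingEdges FE FA).Nodup := by
    refine Multiset.nodup_add.2 ⟨FE.nodup, FA.nodup.map_on ?_, ?_⟩
    · rintro a ha b hb hab
      rcases Sym2.eq_iff.1 hab with ⟨h1, h2⟩ | ⟨h1, h2⟩
      · exact Prod.ext h1 h2
      · have := hFA a ha
        have := hFA b hb
        have := congrArg rank h1
        have := congrArg rank h2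
        omega
    · refine Multiset.disjoint_left.2 fun {e} he he' => ?_
      obtain ⟨a, ha, rfl⟩ := Multiset.mem_map.1 he'
      have := hFE _ he a.2 (Sym2.mem_mk_right _ _)
      have := hFA a ha
      omega
  refine acyclicEdgeMultiset_of_exists_leaf hnodup ?_ fun S hSM hS0 => ?_
  · intro e he
    rcases mem_underlyingEdges.1 he with he | ⟨a, ha, rfl⟩
    · exact hloop e he
    · exact Sym2.mk_isDiag_iff.not.2 fun h => (hFA a ha).ne (congrArg rank h)
  have hS : ∀ e ∈ S, e ∈ FE ∨ ∃ a ∈ FA, s(a.1, a.2) = e :=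
    fun e he => mem_underlyingEdges.1 (Multiset.mem_of_le hSM he)
  by_cases hH : (FA.filter fun a => s(a.1, a.2) ∈ S).Nonempty
  · -- the head of a highest arc of `S` is a leaf
    obtain ⟨a, ha, hmax⟩ := Finset.exists_max_image _ (fun a => rank a.2) hH
    rw [Finset.mem_filter] at ha
    refine ⟨_, ha.2, a.2, Sym2.mem_mk_right _ _, fun e' he' hae' => ?_⟩
    have hlt := hFA a ha.1
    rcases hS e' he' with he'E | ⟨b, hb, rfl⟩
    · have := hFE e' he'E _ hae'
      omega
    · rcases Sym2.mem_iff.1 hae' with h | h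
      · have := hmax b (Finset.mem_filter.2 ⟨hb, he'⟩)
        have := hFA b hb
        have := congrArg rank h
        omega
      · rw [hhead a ha.1 b hb h]
  · have hSFE : ∀ e ∈ S, e ∈ FE := by
      intro e he
      refine (hS e he).resolve_right ?_
      rintro ⟨a, ha, rfl⟩
      exact hH ⟨a, Finset.mem_filter.2 ⟨ha, he⟩⟩
    obtain ⟨e, he⟩ := Multiset.exists_mem_of_ne_zero hS0
    obtain ⟨v, hve, hv⟩ := hprivate e (hSFE e he)
    exact ⟨e, he, v, hve, fun e' he' hve' => hv e' (hSFE e' he') hve'⟩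

theorem IsMixedEdgeCover.exists_acyclic_subcover {FE : Finset (Sym2 V)} {FA : Finset (V × V)}
    (hloop : ∀ e ∈ FE, ¬ e.IsDiag) (hcov : IsMixedEdgeCover FE FA) :
    ∃ FE' ⊆ FE, ∃ FA' ⊆ FA,
      IsMixedEdgeCover FE' FA' ∧ AcyclicEdgeMultiset (underlyingEdges FE' FA') := by
  obtain ⟨rank, pred, hrank, hpred⟩ := exists_rank_of_forall_reflTransGen
    (r := fun u v => (u, v) ∈ FA) (Y := {v | ∃ e ∈ FE, v ∈ e}) hcov
  obtain ⟨FE', hFE', hcovers, hprivate⟩ := exists_edge_subcover_with_private_vertices FE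
  set FA' := (Finset.univ.filter (0 < rank ·)).image fun v => (pred v, v)
  have hFA' : ∀ a ∈ FA', 0 < rank a.2 ∧ a = (pred a.2, a.2) := by
    simp only [FA', Finset.mem_image, Finset.mem_filter, Finset.mem_univ, true_and]
    rintro _ ⟨v, hv, rfl⟩
    exact ⟨hv, rfl⟩
  refine ⟨FE', hFE', FA', fun a ha => ?_, ?_, ?_⟩
  · obtain ⟨hpos, ha'⟩ := hFA' a ha
    exact ha' ▸ (hpred _ hpos).1
  · refine isMixedEdgeCover_of_rank rank (fun v hv => hcovers v ((hrank v).1 hv))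
      fun v hv => ⟨pred v, ?_, (hpred v hv).2⟩
    exact Finset.mem_image.2 ⟨v, Finset.mem_filter.2 ⟨Finset.mem_univ _, hv⟩, rfl⟩
  · refine acyclicEdgeMultiset_underlyingEdges_of_rank rank (fun e he => hloop e (hFE' he))
      (fun e he v hv => (hrank v).2 ⟨e, hFE' he, hv⟩) hprivate (fun a ha => ?_)
      fun a ha b hb hab => ?_
    · obtain ⟨hpos, ha'⟩ := hFA' a ha
      rw [ha']
      exact (hpred _ hpos).2
    · rw [(hFA' a ha).2, (hFA' b hb).2, hab]

theorem AcyclicEdgeMultiset.exists_mem_forall_arc_notMem {FE : Finset (Sym2 V)}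
    {FA : Finset (V × V)} (hac : AcyclicEdgeMultiset (underlyingEdges FE FA)) {T : Finset V}
    (hT : T.Nonempty) : ∃ v ∈ T, ∀ u ∈ T, (u, v) ∉ FA := by
  by_contra! h
  choose! parent hparentT hparentA using h
  set D := T.image fun v => (parent v, v)
  set S := D.val.map fun a => s(a.1, a.2)
  have hcard : Multiset.card S = T.card := by
    rw [Multiset.card_map, Finset.card_val,
      Finset.card_image_of_injective _ fun a b h => congrArg Prod.snd h]
  have hDFA : D ⊆ FA := by
    simp only [D, Finset.image_subset_iff]
    exact hparentA
  have hSle : S ≤ underlyingEdges FE FA :=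
    (Multiset.map_le_map (Finset.val_le_iff.2 hDFA)).trans (Multiset.le_add_left _ _)
  have hS0 : S ≠ 0 := by
    rw [← Multiset.card_pos, hcard]
    exact hT.card_pos
  have hST : incidentVertices S ⊆ T := by
    intro w hw
    obtain ⟨e, he, hwe⟩ := mem_incidentVertices.1 hw
    simp only [S, D, Multiset.mem_map, Finset.mem_val, Finset.mem_image] at he
    obtain ⟨_, ⟨v, hv, rfl⟩, rfl⟩ := he
    rcases Sym2.mem_iff.1 hwe with rfl | rfl
    · exact hparentT _ hv
    · exact hv
  have := hac S hSle hS0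
  have := Finset.card_le_card hST
  change _ < (incidentVertices S).card at *
  omega

theorem IsMixedCoveringForest.isMixedEdgeCover {FE : Finset (Sym2 V)} {FA : Finset (V × V)}
    (hf : IsMixedCoveringForest FE FA) : IsMixedEdgeCover FE FA := by
  classical
  by_contra hnc
  set T := Finset.univ.filter fun v => ¬ ∃ u, (∃ e ∈ FE, u ∈ e) ∧ arcReach FA u v
  have hT : T.Nonempty := by
    simpa [IsMixedEdgeCover, T, Finset.filter_nonempty_iff] using hnc
  obtain ⟨v, hvT, hv⟩ := hf.1.exists_mem_forall_arc_notMem hT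
  simp only [T, Finset.mem_filter, Finset.mem_univ, true_and] at hvT
  rcases one_le_coverCount_iff.1 (hf.2 v) with hedge | ⟨⟨u, _⟩, hu, rfl⟩
  · exact hvT ⟨v, hedge, .refl⟩
  · have huT : u ∉ T := fun huT => hv u huT hu
    simp only [T, Finset.mem_filter, Finset.mem_univ, true_and, not_not] at huT
    obtain ⟨w, hw, hwu⟩ := huT
    exact hvT ⟨w, hw, hwu.tail hu⟩

theorem minimal_mec_iff_minimal_mcf_general
    (E : Finset (Sym2 V))
    (hE : ∀ e ∈ E, ¬ e.IsDiag)
    (FE : Finset (Sym2 V)) (FA : Finset (V × V)) (hFE : FE ⊆ E) :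
    (IsMixedEdgeCover FE FA ∧
      ∀ FE' FA', FE' ⊆ FE → FA' ⊆ FA → IsMixedEdgeCover FE' FA' →
        FE' = FE ∧ FA' = FA) ↔
    (IsMixedCoveringForest FE FA ∧
      ∀ FE' FA', FE' ⊆ FE → FA' ⊆ FA → IsMixedCoveringForest FE' FA' →
        FE' = FE ∧ FA' = FA) := by
  constructor
  · rintro ⟨hcov, hmin⟩
    obtain ⟨FE', hFE', FA', hFA', hcov', hac'⟩ :=
      hcov.exists_acyclic_subcover fun e he => hE e (hFE he)
    obtain ⟨rfl, rfl⟩ := hmin FE' FA' hFE' hFA' hcov'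
    exact ⟨⟨hac', hcov.one_le_coverCount⟩,
      fun FE' FA' hFE' hFA' hf => hmin FE' FA' hFE' hFA' hf.isMixedEdgeCover⟩
  · rintro ⟨hf, hmin⟩
    exact ⟨hf.isMixedEdgeCover, fun FE' FA' hFE' hFA' hcov => hmin FE' FA' hFE' hFA'
      ⟨hf.1.mono (underlyingEdges_mono hFE' hFA'), hcov.one_le_coverCount⟩⟩

theorem minimal_mec_iff_minimal_mcf
    (E : Finset (Sym2 V)) (A : Finset (V × V))
    (hE : ∀ e ∈ E, ¬ e.IsDiag) (hA : ∀ a ∈ A, a.1 ≠ a.2)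
    (FE : Finset (Sym2 V)) (FA : Finset (V × V)) (hFE : FE ⊆ E) (hFA : FA ⊆ A) :
    (IsMixedEdgeCover FE FA ∧
      ∀ FE' FA', FE' ⊆ FE → FA' ⊆ FA → IsMixedEdgeCover FE' FA' →
        FE' = FE ∧ FA' = FA) ↔
    (IsMixedCoveringForest FE FA ∧
      ∀ FE' FA', FE' ⊆ FE → FA' ⊆ FA → IsMixedCoveringForest FE' FA' →
        FE' = FE ∧ FA' = FA) :=
  minimal_mec_iff_minimal_mcf_general E hE FE FA hFE
end

section
/- For a mixed graph G = (V, E ∪ A) admitting a mixed edge cover, the minimum mix-size of a mixed edge cover is at least |V| minus the maximum mix-size of a matching forest; i.e., ρ(G) ≥ |V| − ν(G). -/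
/-!
Take a minimum mixed edge cover `(FE, FA)`; let `R` be the set of vertices covered by `FE` and
`N` its complement. Every `v ∈ N` is reached from `R` along arcs of `FA`, so it has an in-arc
from a vertex strictly closer to `R`; these `|N|` arcs form a branching rooted in `R`. A maximal
matching `ME` among the non-loop edges of `FE` satisfies `|R| ≤ |FE| + |ME|`, and `ME` together
with the chosen arcs is a matching forest. Hence `|V| - ν ≤ |R| + |N| - |ME| - |N|/2 ≤ |FE| + |FA|/2 = ρ`.
-/

variable {V : Type*} [Fintype V] [DecidableEq V]

open Finset

section Rank

variable {α : Type*} (r : α → α → Prop) (P : α → Prop)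

def reachesInSteps : ℕ → α → Prop
  | 0 => P
  | n + 1 => fun v => ∃ u, reachesInSteps n u ∧ r u v

variable {r P}

theorem exists_reachesInSteps_of_reflTransGen {u v : α} (hu : P u)
    (h : Relation.ReflTransGen r u v) : ∃ n, reachesInSteps r P n v := by
  induction h with
  | refl => exact ⟨0, hu⟩
  | tail _ hwv ih =>
    obtain ⟨n, hn⟩ := ih
    exact ⟨n + 1, _, hn, hwv⟩

theorem exists_decreasing_parent (h : ∀ v, ∃ u, P u ∧ Relation.ReflTransGen r u v) :
    ∃ (d : α → ℕ) (p : α → α), ∀ v, ¬ P v → r (p v) v ∧ d (p v) < d v := by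
  classical
  have hex : ∀ v, ∃ n, reachesInSteps r P n v := fun v =>
    let ⟨_, hu, huv⟩ := h v
    exists_reachesInSteps_of_reflTransGen hu huv
  let d v := Nat.find (hex v)
  have hparent : ∀ v, ∃ u, ¬ P v → r u v ∧ d u < d v := by
    intro v
    by_cases hv : P v
    · exact ⟨v, absurd hv⟩
    have hspec : reachesInSteps r P (d v) v := Nat.find_spec (hex v)
    obtain ⟨m, hm⟩ : ∃ m, d v = m + 1 :=
      Nat.exists_eq_succ_of_ne_zero fun h0 => hv (by rwa [h0] at hspec)
    rw [hm] at hspec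
    obtain ⟨u, hu, huv⟩ := hspec
    exact ⟨u, fun _ => ⟨huv, (Nat.find_min' (hex u) hu).trans_lt (by omega)⟩⟩
  choose p hp using hparent
  exact ⟨d, p, hp⟩

end Rank

theorem exists_argmax_sym2 {α β : Type*} [LinearOrder β] {g : α → β}
    (hg : Function.Injective g) :
    ∃ ψ : Sym2 α → α, ∀ e, ψ e ∈ e ∧ ∀ w ∈ e, w ≠ ψ e → g w < g (ψ e) := by
  classical
  have hmax : ∀ e : Sym2 α, ∃ c ∈ e, ∀ w ∈ e, w ≠ c → g w < g c := fun e => by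
    obtain ⟨c, hc, hle⟩ := e.toFinset.exists_max_image g ⟨_, Sym2.mem_toFinset.2 e.out_fst_mem⟩
    exact ⟨c, Sym2.mem_toFinset.1 hc, fun w hw hne =>
      (hle w (Sym2.mem_toFinset.2 hw)).lt_of_ne (hg.ne hne)⟩
  choose ψ hψ using hmax
  exact ⟨ψ, hψ⟩

theorem acyclicEdgeMultiset_of_nodup_map {β : Type*} [LinearOrder β] (g : V → β)
    {M : Multiset (Sym2 V)} (ψ : Sym2 V → V)
    (hψ : ∀ e ∈ M, ψ e ∈ e ∧ ∃ c ∈ e, g c < g (ψ e)) (hnd : (M.map ψ).Nodup) :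
    AcyclicEdgeMultiset M := by
  intro S hS hS0
  set T := univ.filter fun v : V => ∃ e ∈ S.toFinset, v ∈ e
  have hT : ∀ e ∈ S, ∀ v ∈ e, v ∈ T := fun e he v hv =>
    mem_filter.2 ⟨mem_univ v, e, Multiset.mem_toFinset.2 he, hv⟩
  have hψS : ∀ e ∈ S, ψ e ∈ e ∧ ∃ c ∈ e, g c < g (ψ e) := fun e he =>
    hψ e (Multiset.mem_of_le hS he)
  obtain ⟨e₀, he₀⟩ := Multiset.exists_mem_of_ne_zero hS0
  obtain ⟨m, hmT, hmin⟩ := T.exists_min_image g ⟨_, hT e₀ he₀ _ (hψS e₀ he₀).1⟩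
  -- The `g`-least vertex touched by `S` is not `ψ` of any edge of `S`.
  have himage : (S.map ψ).toFinset ⊆ T.erase m := by
    intro v hv
    obtain ⟨e, he, rfl⟩ := Multiset.mem_map.1 (Multiset.mem_toFinset.1 hv)
    obtain ⟨hψe, c, hc, hlt⟩ := hψS e he
    refine mem_erase.2 ⟨fun hm => ?_, hT e he _ hψe⟩
    exact (hmin c (hT e he c hc)).not_gt (hm ▸ hlt)
  calc Multiset.card S = Multiset.card (S.map ψ) := (Multiset.card_map _ _).symm
    _ = #(S.map ψ).toFinset :=
        (Multiset.toFinset_card_of_nodup (Multiset.nodup_of_le (Multiset.map_le_map hS) hnd)).symm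
    _ ≤ #(T.erase m) := card_le_card himage
    _ < #T := card_erase_lt_of_mem hmT

theorem mem_edgeCovered {FE : Finset (Sym2 V)} {v : V} :
    v ∈ edgeCovered FE ↔ ∃ e ∈ FE, v ∈ e := by
  simp [edgeCovered, edgeCoverCount, Finset.card_pos, Finset.filter_nonempty_iff]

theorem edgeCoverCount_eq_zero_iff {FE : Finset (Sym2 V)} {v : V} :
    edgeCoverCount FE v = 0 ↔ v ∉ edgeCovered FE := by
  simp [edgeCovered]

theorem edgeCovered_eq_biUnion (FE : Finset (Sym2 V)) :
    edgeCovered FE = FE.biUnion Sym2.toFinset := by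
  ext v
  simp [mem_edgeCovered]

theorem edgeCovered_mono {FE FE' : Finset (Sym2 V)} (h : FE ⊆ FE') :
    edgeCovered FE ⊆ edgeCovered FE' := fun _ hv =>
  mem_edgeCovered.2 ((mem_edgeCovered.1 hv).imp fun _ ⟨he, hve⟩ => ⟨h he, hve⟩)

theorem card_edgeCovered_le (FE : Finset (Sym2 V)) : #(edgeCovered FE) ≤ 2 * #FE := by
  rw [edgeCovered_eq_biUnion, mul_comm, ← smul_eq_mul, ← Finset.sum_const]
  refine (card_biUnion_le).trans (sum_le_sum fun e _ => ?_)
  rw [Sym2.card_toFinset]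
  split_ifs <;> omega

theorem IsMatching.insert {ME : Finset (Sym2 V)} (hME : IsMatching ME) {f : Sym2 V}
    (hf : ∀ v ∈ f, v ∉ edgeCovered ME) : IsMatching (insert f ME) := by
  intro v
  unfold edgeCoverCount
  rw [filter_insert]
  split_ifs with hv
  · have : edgeCoverCount ME v = 0 := edgeCoverCount_eq_zero_iff.2 (hf v hv)
    exact (card_insert_le _ _).trans (by rw [← edgeCoverCount, this])
  · exact hME v

theorem card_edgeCovered_le_of_maximal {FE ME : Finset (Sym2 V)} (hsub : ME ⊆ FE)
    (hME : IsMatching ME)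
    (hmax : ∀ f ∈ FE, ¬ f.IsDiag → IsMatching (insert f ME) → f ∈ ME) :
    #(edgeCovered FE) ≤ #FE + #ME := by
  -- An edge outside a maximal matching has at most one endpoint the matching misses.
  have hfree : #(edgeCovered FE \ edgeCovered ME) ≤ #(FE \ ME) := by
    refine card_le_card_of_forall_subsingleton (fun v f => v ∈ f) (fun v hv => ?_)
      (fun f hf x hx y hy => ?_)
    · obtain ⟨hvFE, hvME⟩ := mem_sdiff.1 hv
      obtain ⟨f, hf, hvf⟩ := mem_edgeCovered.1 hvFE
      exact ⟨f, mem_sdiff.2 ⟨hf, fun h => hvME (mem_edgeCovered.2 ⟨f, h, hvf⟩)⟩, hvf⟩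
    · obtain ⟨hfFE, hfME⟩ := mem_sdiff.1 hf
      obtain ⟨⟨-, hxME⟩, hxf⟩ := And.imp_left mem_sdiff.1 hx
      obtain ⟨⟨-, hyME⟩, hyf⟩ := And.imp_left mem_sdiff.1 hy
      by_contra hne
      have hfxy : f = s(x, y) := (Sym2.mem_and_mem_iff hne).1 ⟨hxf, hyf⟩
      have hfree_ends : ∀ v ∈ f, v ∉ edgeCovered ME := by
        intro v hv
        rcases Sym2.mem_iff.1 (hfxy ▸ hv) with rfl | rfl <;> assumption
      have hdiag : ¬ f.IsDiag := by rwa [hfxy, Sym2.mk_isDiag_iff]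
      exact hfME (hmax f hfFE hdiag (hME.insert hfree_ends))
  have hcov : #(edgeCovered FE) ≤ #(edgeCovered FE \ edgeCovered ME) + #(edgeCovered ME) :=
    card_le_card_sdiff_add_card
  have := card_edgeCovered_le ME
  have := card_sdiff_of_subset hsub
  have := card_le_card hsub
  omega

theorem exists_loopless_matching_card_edgeCovered_le (FE : Finset (Sym2 V)) :
    ∃ ME ⊆ FE, IsMatching ME ∧ (∀ e ∈ ME, ¬ e.IsDiag) ∧ #(edgeCovered FE) ≤ #FE + #ME := by
  classical
  let C := (FE.filter (¬ ·.IsDiag)).powerset.filter IsMatching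
  have hempty : ∅ ∈ C := by simp [C, IsMatching, edgeCoverCount]
  obtain ⟨ME, hC, hmax⟩ := C.exists_max_image card ⟨∅, hempty⟩
  obtain ⟨hsub, hME⟩ := mem_filter.1 hC
  rw [mem_powerset] at hsub
  have hsubFE : ME ⊆ FE := hsub.trans (filter_subset _ _)
  refine ⟨ME, hsubFE, hME, fun e he => (mem_filter.1 (hsub he)).2,
    card_edgeCovered_le_of_maximal hsubFE hME fun f hf hdiag hins => ?_⟩
  by_contra hfME
  have := hmax (insert f ME) (mem_filter.2 ⟨mem_powerset.2
    (insert_subset (mem_filter.2 ⟨hf, hdiag⟩) hsub), hins⟩)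
  rw [card_insert_of_notMem hfME] at this
  omega

def parentArcs (N : Finset V) (p : V → V) : Finset (V × V) := N.image fun v => (p v, v)

theorem acyclicEdgeMultiset_parentArcs {ME : Finset (Sym2 V)} (hME : IsMatching ME)
    (hloop : ∀ e ∈ ME, ¬ e.IsDiag) {N : Finset V} (hN : ∀ v ∈ N, v ∉ edgeCovered ME)
    (p : V → V) (d : V → ℕ) (hp : ∀ v ∈ N, d (p v) < d v) :
    AcyclicEdgeMultiset (underlyingEdges ME (parentArcs N p)) := by
  -- Tie-breaking `d` by an enumeration of `V` orients every edge of the matching.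
  let g : V → ℕ ×ₗ Fin (Fintype.card V) := fun v => toLex (d v, Fintype.equivFin V v)
  have hg : Function.Injective g := fun u v h =>
    (Fintype.equivFin V).injective (congrArg Prod.snd (toLex.injective h))
  have hgp : ∀ v ∈ N, g (p v) < g v := fun v hv => Prod.Lex.toLex_lt_toLex.2 (Or.inl (hp v hv))
  have hpv : ∀ v ∈ N, p v ≠ v := fun v hv h => (hgp v hv).ne (congrArg g h)
  obtain ⟨ψ, hψ⟩ := exists_argmax_sym2 hg
  have hψarc : ∀ v ∈ N, ψ s(p v, v) = v := fun v hv => by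
    by_contra hne
    have := (hψ _).2 v (Sym2.mem_mk_right _ _) (Ne.symm hne)
    rcases Sym2.mem_iff.1 (hψ s(p v, v)).1 with h | h
    · exact (hgp v hv).not_gt (h ▸ this)
    · exact hne h
  refine acyclicEdgeMultiset_of_nodup_map g ψ (fun e he => ⟨(hψ e).1, ?_⟩) ?_
  · have hdiag : ¬ e.IsDiag := by
      rcases Multiset.mem_add.1 he with he | he
      · exact hloop e he
      obtain ⟨a, ha, rfl⟩ := Multiset.mem_map.1 he
      obtain ⟨v, hv, rfl⟩ := mem_image.1 ha
      exact fun h => hpv v hv (Sym2.mk_isDiag_iff.1 h)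
    exact ⟨_, Sym2.other_mem (hψ e).1, (hψ e).2 _ (Sym2.other_mem _) (Sym2.other_ne hdiag _)⟩
  rw [underlyingEdges, Multiset.map_add, Multiset.map_map, Multiset.nodup_add]
  refine ⟨ME.nodup.map_on fun e he f hf hef => ?_, (parentArcs N p).nodup.map_on ?_, ?_⟩
  · exact card_le_one.1 (hME (ψ f)) e (mem_filter.2 ⟨he, hef ▸ (hψ e).1⟩) f
      (mem_filter.2 ⟨hf, (hψ f).1⟩)
  · intro a ha b hb hab
    obtain ⟨v, hv, rfl⟩ := mem_image.1 ha
    obtain ⟨w, hw, rfl⟩ := mem_image.1 hb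
    rw [Function.comp_apply, Function.comp_apply, hψarc v hv, hψarc w hw] at hab
    rw [hab]
  · rw [Multiset.disjoint_left]
    intro x hxME hxN
    obtain ⟨e, he, rfl⟩ := Multiset.mem_map.1 hxME
    obtain ⟨_, ha, hψv⟩ := Multiset.mem_map.1 hxN
    obtain ⟨v, hv, rfl⟩ := mem_image.1 ha
    rw [Function.comp_apply, hψarc v hv] at hψv
    exact hN v hv (mem_edgeCovered.2 ⟨e, he, hψv ▸ (hψ e).1⟩)

theorem isMatchingForest_parentArcs {ME : Finset (Sym2 V)} (hME : IsMatching ME)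
    (hloop : ∀ e ∈ ME, ¬ e.IsDiag) {N : Finset V} (hN : ∀ v ∈ N, v ∉ edgeCovered ME)
    (p : V → V) (d : V → ℕ) (hp : ∀ v ∈ N, d (p v) < d v) :
    IsMatchingForest ME (parentArcs N p) := by
  refine ⟨acyclicEdgeMultiset_parentArcs hME hloop hN p d hp, fun v => ?_⟩
  have harc : arcCoverCount (parentArcs N p) v = if v ∈ N then 1 else 0 := by
    rw [arcCoverCount, parentArcs, filter_image,
      card_image_of_injective _ fun a b h => congrArg Prod.snd h]
    simp only [filter_eq', apply_ite card, card_singleton, card_empty]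
  rw [harc]
  split_ifs with hv
  · rw [edgeCoverCount_eq_zero_iff.2 (hN v hv)]
  · exact hME v

theorem min_mec_ge_card_sub_max_mf_general
    (E : Finset (Sym2 V)) (A : Finset (V × V))
    (ν ρ : ℚ)
    (hν : IsGreatest {q : ℚ | ∃ FE FA, FE ⊆ E ∧ FA ⊆ A ∧ IsMatchingForest FE FA ∧
      q = mixSize FE FA} ν)
    (hρ : IsLeast {q : ℚ | ∃ FE FA, FE ⊆ E ∧ FA ⊆ A ∧ IsMixedEdgeCover FE FA ∧
      q = mixSize FE FA} ρ) :
    (Fintype.card V : ℚ) - ν ≤ ρ := by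
  obtain ⟨FE, FA, hFE, hFA, hcover, rfl⟩ := hρ.1
  obtain ⟨d, p, hp⟩ := exists_decreasing_parent (r := fun u v => (u, v) ∈ FA)
    (P := (· ∈ edgeCovered FE)) fun v => by simpa only [mem_edgeCovered, arcReach] using hcover v
  obtain ⟨ME, hMEsub, hME, hloop, hcard⟩ := exists_loopless_matching_card_edgeCovered_le FE
  set N := (edgeCovered FE)ᶜ
  have hN : ∀ v ∈ N, v ∉ edgeCovered ME := fun v hv hvME =>
    mem_compl.1 hv (edgeCovered_mono hMEsub hvME)
  have hsubFA : parentArcs N p ⊆ FA := image_subset_iff.2 fun v hv => (hp v (mem_compl.1 hv)).1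
  have hforest := isMatchingForest_parentArcs hME hloop hN p d fun v hv => (hp v (mem_compl.1 hv)).2
  have hν' : mixSize ME (parentArcs N p) ≤ ν :=
    hν.2 ⟨ME, _, hMEsub.trans hFE, hsubFA.trans hFA, hforest, rfl⟩
  have hcardArcs : #(parentArcs N p) = #N :=
    card_image_of_injective _ fun a b h => congrArg Prod.snd h
  have hV : #(edgeCovered FE) + #N = Fintype.card V := card_add_card_compl _
  have hFAcard : #N ≤ #FA := hcardArcs ▸ card_le_card hsubFA
  rw [mixSize, hcardArcs] at hν'
  qify at hcard hV hFAcard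
  rw [mixSize]
  linarith

theorem min_mec_ge_card_sub_max_mf
    (E : Finset (Sym2 V)) (A : Finset (V × V))
    (hE : ∀ e ∈ E, ¬ e.IsDiag) (hA : ∀ a ∈ A, a.1 ≠ a.2)
    (hcov : ∃ FE FA, FE ⊆ E ∧ FA ⊆ A ∧ IsMixedEdgeCover FE FA)
    (ν ρ : ℚ)
    (hν : IsGreatest {q : ℚ | ∃ FE FA, FE ⊆ E ∧ FA ⊆ A ∧ IsMatchingForest FE FA ∧
      q = mixSize FE FA} ν)
    (hρ : IsLeast {q : ℚ | ∃ FE FA, FE ⊆ E ∧ FA ⊆ A ∧ IsMixedEdgeCover FE FA ∧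
      q = mixSize FE FA} ρ) :
    (Fintype.card V : ℚ) - ν ≤ ρ :=
  min_mec_ge_card_sub_max_mf_general E A ν ρ hν hρ
end

section
/- Root exchange for branchings (Schrijver): Let B1 and B2 be disjoint branchings in a digraph with root sets R(B1) and R(B2), and let R1', R2' be vertex sets with R1' ∪ R2' = R(B1) ∪ R(B2) and R1' ∩ R2' = R(B1) ∩ R(B2). Then B1 ∪ B2 can be repartitioned into branchings B1', B2' with R(B1') = R1' and R(B2') = R2' if and only if every strongly connected component of B1 ∪ B2 with no entering arc intersects both R1' and R2'. -/
/-!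
A branching `C ⊆ D` has a root in every source component `K` of `D`: otherwise every vertex of
`K` has its in-arc of `C` coming from inside `K`, and following in-arcs backwards inside `K`
closes a directed cycle.

Conversely, the condition on source components gives Edmonds' cut condition: every nonempty
vertex set `U` is entered by at least as many arcs of `D = B₁ ∪ B₂` as there are indices `i`
with `U ∩ Rᵢ' = ∅`. A set missing both `Rᵢ'` misses every root of `B₁` and `B₂`, so each `Bᵢ`
enters it; a set missing one of them is entered, since a set entered by no arc contains a source
component. Under the cut condition `R₁'` can be enlarged one vertex at a time: delete an arc
from `R₁'` into the complement that enters `S \ R₁'` from a smallest set `S` which could become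
violated, and uncross to see that no set does. This yields disjoint branchings in `D` with root
sets exactly `R₁'` and `R₂'`; since a branching has `|V| - |roots|` arcs, they use all of `D`.
-/

variable {V : Type*} [Fintype V] [DecidableEq V]

open Finset

theorem mem_rootSet_iff {B : Finset (V × V)} {v : V} :
    v ∈ rootSet B ↔ ∀ a ∈ B, a.2 ≠ v := by
  simp [rootSet, arcCoverCount, filter_eq_empty_iff]

theorem rootSet_empty : rootSet (∅ : Finset (V × V)) = univ := by
  ext v
  simp [mem_rootSet_iff]

theorem rootSet_insert (B : Finset (V × V)) (u v : V) :
    rootSet (insert (u, v) B) = (rootSet B).erase v := by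
  ext w
  simp only [mem_rootSet_iff, forall_mem_insert, mem_erase]
  tauto

theorem image_snd_eq_compl_rootSet (B : Finset (V × V)) : B.image Prod.snd = (rootSet B)ᶜ := by
  ext v
  simp [mem_rootSet_iff]

theorem eq_of_arcReach_of_mem_rootSet {B : Finset (V × V)} {x y : V} (h : arcReach B x y)
    (hy : y ∈ rootSet B) : x = y := by
  rcases h.cases_tail with rfl | ⟨z, -, hzy⟩
  · rfl
  · exact absurd rfl (mem_rootSet_iff.1 hy _ hzy)

open Classical in
noncomputable def ancestors (B : Finset (V × V)) (v : V) : Finset V :=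
  univ.filter (arcReach B · v)

omit [DecidableEq V] in
theorem mem_ancestors {B : Finset (V × V)} {v w : V} : w ∈ ancestors B v ↔ arcReach B w v := by
  simp [ancestors]

omit [DecidableEq V] in
theorem ancestors_subset_ancestors {B : Finset (V × V)} {v w : V} (h : arcReach B w v) :
    ancestors B w ⊆ ancestors B v :=
  fun _ hx => mem_ancestors.2 ((mem_ancestors.1 hx).trans h)

omit [Fintype V] in
theorem isBranching_empty : IsBranching (∅ : Finset (V × V)) :=
  ⟨fun v => by simp [arcCoverCount], by simp⟩

omit [Fintype V] in
theorem IsBranching.snd_injOn {B : Finset (V × V)} (hB : IsBranching B) :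
    Set.InjOn Prod.snd (B : Set (V × V)) := fun a ha b hb hab =>
  card_le_one.1 (hB.1 a.2) a (mem_filter.2 ⟨ha, rfl⟩) b (mem_filter.2 ⟨hb, hab.symm⟩)

theorem IsBranching.card_add_card_rootSet {B : Finset (V × V)} (hB : IsBranching B) :
    #B + #(rootSet B) = Fintype.card V := by
  rw [← card_image_of_injOn hB.snd_injOn, image_snd_eq_compl_rootSet, card_compl_add_card]

theorem IsBranching.exists_mem_forall_notMem {B : Finset (V × V)} (hB : IsBranching B)
    {U : Finset V} (hU : U.Nonempty) : ∃ v ∈ U, ∀ u ∈ U, (u, v) ∉ B := by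
  obtain ⟨v, hv, hmin⟩ := U.exists_min_image (fun v => #(ancestors B v)) hU
  refine ⟨v, hv, fun u hu huv => ?_⟩
  have hlt : ancestors B u ⊂ ancestors B v :=
    (ssubset_iff_of_subset (ancestors_subset_ancestors (.single huv))).2
      ⟨v, mem_ancestors.2 .refl, fun h => hB.2 _ huv (mem_ancestors.1 h)⟩
  exact (card_lt_card hlt).not_ge (hmin u hu)

omit [Fintype V] in
theorem arcReach_insert_of_not_arcReach {B : Finset (V × V)} {u v x y : V}
    (hvu : ¬ arcReach B v u) (h : arcReach (insert (u, v) B) x y) :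
    arcReach B x y ∨ (arcReach B x u ∧ arcReach B v y) := by
  induction h with
  | refl => exact .inl .refl
  | tail _ hzy ih =>
    rcases mem_insert.1 hzy with heq | hzy
    · obtain ⟨rfl, rfl⟩ := Prod.mk.inj heq
      exact .inr ⟨ih.elim id fun h => absurd h.2 hvu, .refl⟩
    · exact ih.imp (·.tail hzy) fun h => ⟨h.1, h.2.tail hzy⟩

theorem IsBranching.insert {B : Finset (V × V)} (hB : IsBranching B) {u v : V}
    (hv : v ∈ rootSet B) (hvu : ¬ arcReach B v u) : IsBranching (insert (u, v) B) := by
  refine ⟨fun w => ?_, fun a ha hcyc => ?_⟩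
  · have h0 : arcCoverCount B v = 0 := (mem_filter.1 hv).2
    unfold arcCoverCount at h0 ⊢
    rw [filter_insert]
    split_ifs with hw
    · obtain rfl : v = w := hw
      exact (card_insert_le _ _).trans (by omega)
    · exact hB.1 w
  · rcases mem_insert.1 ha with rfl | haB
    · exact (arcReach_insert_of_not_arcReach hvu hcyc).elim hvu fun h => hvu h.1
    · rcases arcReach_insert_of_not_arcReach hvu hcyc with h | ⟨h2u, hv1⟩
      · exact hB.2 a haB h
      · exact hvu (hv1.trans (.head haB h2u))

def IsInSourceComponent (D : Finset (V × V)) (v : V) : Prop :=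
  ∀ a ∈ D, (arcReach D a.2 v ∧ arcReach D v a.2) → (arcReach D a.1 v ∧ arcReach D v a.1)

theorem IsBranching.exists_mem_rootSet_of_isInSourceComponent {C D : Finset (V × V)}
    (hC : IsBranching C) (hCD : C ⊆ D) {v : V} (hv : IsInSourceComponent D v) :
    ∃ x ∈ rootSet C, arcReach D x v ∧ arcReach D v x := by
  classical
  by_contra! hno
  let K := univ.filter fun w => arcReach D w v ∧ arcReach D v w
  obtain ⟨w, hwK, hw⟩ :=
    hC.exists_mem_forall_notMem (U := K) ⟨v, mem_filter.2 ⟨mem_univ _, .refl, .refl⟩⟩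
  obtain ⟨hwv, hvw⟩ := (mem_filter.1 hwK).2
  obtain ⟨u, huw⟩ : ∃ u, (u, w) ∈ C := by
    simpa [mem_rootSet_iff] using fun hw => hno w hw hwv hvw
  exact hw u (by simpa [K] using hv _ (hCD huw) ⟨hwv, hvw⟩) huw

omit [Fintype V] [DecidableEq V] in
theorem mem_of_arcReach_of_closed {D : Finset (V × V)} {U : Finset V}
    (hU : ∀ a ∈ D, a.2 ∈ U → a.1 ∈ U) {x y : V} (h : arcReach D x y) (hy : y ∈ U) :
    x ∈ U := by
  induction h using Relation.ReflTransGen.head_induction_on with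
  | refl => exact hy
  | head hxz _ ih => exact hU _ hxz ih

omit [DecidableEq V] in
theorem exists_isInSourceComponent_of_closed {D : Finset (V × V)} {U : Finset V}
    (hne : U.Nonempty) (hU : ∀ a ∈ D, a.2 ∈ U → a.1 ∈ U) :
    ∃ v ∈ U, IsInSourceComponent D v := by
  obtain ⟨v, hv, hmin⟩ := U.exists_min_image (fun v => #(ancestors D v)) hne
  refine ⟨v, hv, fun a ha ⟨h2v, _⟩ => ?_⟩
  have h1v : arcReach D a.1 v := .head ha h2v
  have heq : ancestors D a.1 = ancestors D v :=
    eq_of_subset_of_card_le (ancestors_subset_ancestors h1v)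
      (hmin _ (mem_of_arcReach_of_closed hU h1v hv))
  exact ⟨h1v, mem_ancestors.1 (heq ▸ mem_ancestors.2 .refl)⟩

def enteringArcs (D : Finset (V × V)) (U : Finset V) : Finset (V × V) :=
  D.filter fun a => a.2 ∈ U ∧ a.1 ∉ U

omit [Fintype V] in
theorem mem_enteringArcs {D : Finset (V × V)} {U : Finset V} {a : V × V} :
    a ∈ enteringArcs D U ↔ a ∈ D ∧ a.2 ∈ U ∧ a.1 ∉ U :=
  mem_filter

omit [Fintype V] in
theorem enteringArcs_union (D D' : Finset (V × V)) (U : Finset V) :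
    enteringArcs (D ∪ D') U = enteringArcs D U ∪ enteringArcs D' U :=
  filter_union _ _ _

omit [Fintype V] in
theorem enteringArcs_erase (D : Finset (V × V)) (U : Finset V) (a : V × V) :
    enteringArcs (D.erase a) U = (enteringArcs D U).erase a :=
  filter_erase _ _ _

omit [Fintype V] in
theorem card_enteringArcs_inter_add_card_enteringArcs_union_le (D : Finset (V × V))
    (U W : Finset V) :
    #(enteringArcs D (U ∩ W)) + #(enteringArcs D (U ∪ W)) ≤
      #(enteringArcs D U) + #(enteringArcs D W) := by
  rw [← card_union_add_card_inter (enteringArcs D U),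
    ← card_union_add_card_inter (enteringArcs D (U ∩ W))]
  refine add_le_add (card_le_card fun a => ?_) (card_le_card fun a => ?_) <;>
    simp only [mem_union, mem_inter, mem_enteringArcs] <;> tauto

theorem IsBranching.enteringArcs_nonempty {B : Finset (V × V)} (hB : IsBranching B)
    {U : Finset V} (hU : U.Nonempty) (hUB : Disjoint U (rootSet B)) :
    (enteringArcs B U).Nonempty := by
  obtain ⟨v, hv, hno⟩ := hB.exists_mem_forall_notMem hU
  obtain ⟨u, huv⟩ : ∃ u, (u, v) ∈ B := by
    simpa [mem_rootSet_iff] using disjoint_left.1 hUB hv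
  exact ⟨(u, v), mem_enteringArcs.2 ⟨huv, hv, fun hu => hno u hu huv⟩⟩

theorem enteringArcs_nonempty_of_disjoint {D : Finset (V × V)} {R : Finset V}
    (hR : ∀ v, IsInSourceComponent D v → ∃ x ∈ R, arcReach D x v ∧ arcReach D v x)
    {U : Finset V} (hU : U.Nonempty) (hUR : Disjoint U R) : (enteringArcs D U).Nonempty := by
  by_contra hent
  have hclosed : ∀ a ∈ D, a.2 ∈ U → a.1 ∈ U := fun a ha h2 =>
    by_contra fun h1 => hent ⟨a, mem_enteringArcs.2 ⟨ha, h2, h1⟩⟩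
  obtain ⟨v, hv, hsrc⟩ := exists_isInSourceComponent_of_closed hU hclosed
  obtain ⟨x, hxR, hxv, -⟩ := hR v hsrc
  exact disjoint_left.1 hUR (mem_of_arcReach_of_closed hclosed hxv hv) hxR

/-- Edmonds' cut condition for disjoint branchings in `D` with root sets `R1` and `R2`. -/
def EdmondsCondition (D : Finset (V × V)) (R1 R2 : Finset V) : Prop :=
  ∀ U : Finset V, U.Nonempty →
    (if Disjoint U R1 then 1 else 0) + (if Disjoint U R2 then 1 else 0) ≤ #(enteringArcs D U)

section EdmondsCondition

variable {D : Finset (V × V)} {R1 R2 : Finset V}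

omit [Fintype V] in
theorem EdmondsCondition.symm (h : EdmondsCondition D R1 R2) : EdmondsCondition D R2 R1 :=
  fun U hU => (add_comm _ _).le.trans (h U hU)

omit [Fintype V] in
theorem EdmondsCondition.erase (h : EdmondsCondition D R1 R2) {u v : V} (huv : (u, v) ∈ D)
    (hblock : ∀ U : Finset V, v ∈ U → u ∉ U →
      (if Disjoint U R2 then 1 else 0) < #(enteringArcs D U)) :
    EdmondsCondition (D.erase (u, v)) (insert v R1) R2 := by
  intro U hU
  have hUD := h U hU
  rw [enteringArcs_erase]
  by_cases hvU : v ∈ U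
  · rw [if_neg (fun h' => (disjoint_insert_right.1 h').1 hvU)]
    by_cases huU : u ∈ U
    · rw [erase_eq_of_notMem (fun h' => (mem_enteringArcs.1 h').2.2 huU)]
      omega
    · rw [card_erase_of_mem (mem_enteringArcs.2 ⟨huv, hvU, huU⟩)]
      have := hblock U hvU huU
      omega
  · rw [erase_eq_of_notMem (fun h' => hvU (mem_enteringArcs.1 h').2.1)]
    simpa [disjoint_insert_right, hvU] using hUD

omit [Fintype V] in
theorem EdmondsCondition.exists_arc_of_card_enteringArcs_le (h : EdmondsCondition D R1 R2)
    {S : Finset V} (hS : ¬ S ⊆ R1)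
    (hSD : #(enteringArcs D S) ≤ if Disjoint S R2 then 1 else 0) :
    ∃ u ∈ S ∩ R1, ∃ v ∈ S \ R1, (u, v) ∈ D := by
  have hlt : #(enteringArcs D S) < #(enteringArcs D (S \ R1)) := by
    have hZ := h _ (sdiff_nonempty.2 hS)
    rw [if_pos sdiff_disjoint] at hZ
    have : (if Disjoint S R2 then 1 else 0) ≤ if Disjoint (S \ R1) R2 then 1 else 0 := by
      split_ifs with h1 h2
      exacts [le_rfl, absurd (h1.mono_left sdiff_subset) h2, Nat.zero_le _, le_rfl]
    omega
  obtain ⟨a, ha, haS⟩ := exists_mem_notMem_of_card_lt_card hlt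
  obtain ⟨haD, ha2, ha1⟩ := mem_enteringArcs.1 ha
  have ha1S : a.1 ∈ S :=
    by_contra fun h1 => haS (mem_enteringArcs.2 ⟨haD, (mem_sdiff.1 ha2).1, h1⟩)
  exact ⟨a.1, mem_inter.2 ⟨ha1S, by simpa [ha1S] using ha1⟩, a.2, ha2, haD⟩

theorem EdmondsCondition.exists_arc_erase (h : EdmondsCondition D R1 R2) (hR1 : R1 ≠ univ) :
    ∃ u ∈ R1, ∃ v ∉ R1, (u, v) ∈ D ∧
      EdmondsCondition (D.erase (u, v)) (insert v R1) R2 := by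
  -- Deleting an arc `(u, v)` that enters `U`, with `v ∉ R1`, and adding `v` to `R1` violates the
  -- condition at `U` exactly when `U` is tight.
  let Tight := univ.filter fun S : Finset V =>
    ¬ S ⊆ R1 ∧ #(enteringArcs D S) ≤ if Disjoint S R2 then 1 else 0
  have huniv : univ ∈ Tight :=
    mem_filter.2 ⟨mem_univ _, fun h' => hR1 (univ_subset_iff.1 h'), by simp [enteringArcs]⟩
  obtain ⟨S, hS, hmin⟩ := Tight.exists_min_image card ⟨univ, huniv⟩
  obtain ⟨hSR1, hSD⟩ := (mem_filter.1 hS).2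
  obtain ⟨u, hu, v, hv, huv⟩ := h.exists_arc_of_card_enteringArcs_le hSR1 hSD
  refine ⟨u, (mem_inter.1 hu).2, v, (mem_sdiff.1 hv).2, huv, h.erase huv fun U hvU huU => ?_⟩
  by_contra! hUD
  have hUpos : 0 < #(enteringArcs D U) :=
    card_pos.2 ⟨_, mem_enteringArcs.2 ⟨huv, hvU, huU⟩⟩
  have hUR2 : Disjoint U R2 := by
    by_contra hUR2
    rw [if_neg hUR2] at hUD
    omega
  rw [if_pos hUR2] at hUD
  -- Uncrossing `U` with the minimal tight set `S`: `U ∩ S` is again tight, hence equal to `S`.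
  have hUS : U ∩ S ∈ Tight := by
    have hsub := card_enteringArcs_inter_add_card_enteringArcs_union_le D U S
    have hunion := h (U ∪ S) ⟨v, mem_union_left _ hvU⟩
    simp only [disjoint_union_left, hUR2, true_and] at hunion
    refine mem_filter.2 ⟨mem_univ _, fun h' => (mem_sdiff.1 hv).2 (h' ?_), ?_⟩
    · exact mem_inter.2 ⟨hvU, (mem_sdiff.1 hv).1⟩
    · rw [if_pos (hUR2.mono_left inter_subset_left)]
      split_ifs at hunion hSD <;> omega
  have hSU : U ∩ S = S := eq_of_subset_of_card_le inter_subset_right (hmin _ hUS)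
  exact huU (mem_inter.1 (hSU ▸ (mem_inter.1 hu).1)).1

end EdmondsCondition

theorem EdmondsCondition.exists_disjoint_branchings {D : Finset (V × V)} {R1 R2 : Finset V}
    (h : EdmondsCondition D R1 R2) :
    ∃ C1 C2 : Finset (V × V), C1 ⊆ D ∧ C2 ⊆ D ∧ Disjoint C1 C2 ∧
      IsBranching C1 ∧ IsBranching C2 ∧ rootSet C1 = R1 ∧ rootSet C2 = R2 := by
  by_cases hR1 : R1 = univ
  · by_cases hR2 : R2 = univ
    · subst hR1 hR2
      exact ⟨∅, ∅, empty_subset _, empty_subset _, disjoint_empty_left _,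
        isBranching_empty, isBranching_empty, rootSet_empty, rootSet_empty⟩
    · obtain ⟨C2, C1, hC2, hC1, hC, hb2, hb1, hr2, hr1⟩ := h.symm.exists_disjoint_branchings
      exact ⟨C1, C2, hC1, hC2, hC.symm, hb1, hb2, hr1, hr2⟩
  · obtain ⟨u, hu, v, hv, huv, h'⟩ := h.exists_arc_erase hR1
    obtain ⟨C1, C2, hC1, hC2, hC, hb1, hb2, hr1, hr2⟩ := h'.exists_disjoint_branchings
    have hu' : u ∈ rootSet C1 := hr1 ▸ mem_insert_of_mem hu
    have hvu : ¬ arcReach C1 v u := fun h =>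
      hv (eq_of_arcReach_of_mem_rootSet h hu' ▸ hu)
    refine ⟨insert (u, v) C1, C2, insert_subset huv (hC1.trans (erase_subset _ _)),
      hC2.trans (erase_subset _ _),
      disjoint_insert_left.2 ⟨fun h2 => notMem_erase _ _ (hC2 h2), hC⟩,
      hb1.insert (hr1 ▸ mem_insert_self v R1) hvu, hb2, ?_, hr2⟩
    rw [rootSet_insert, hr1, erase_insert hv]
-- The step shrinks `R1ᶜ`; the swap, made only when `R1 = univ`, halves the measure.
termination_by #R1ᶜ + 2 * #R2ᶜ
decreasing_by
  · have : 0 < #R2ᶜ := card_pos.2 (nonempty_iff_ne_empty.2 ((compl_eq_empty_iff _).not.2 hR2))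
    simp only [hR1, compl_univ, card_empty]
    omega
  · have : 0 < #R1ᶜ := card_pos.2 ⟨v, mem_compl.2 hv⟩
    rw [compl_insert, card_erase_of_mem (mem_compl.2 hv)]
    omega

theorem edmondsCondition_of_forall_isInSourceComponent {B1 B2 : Finset (V × V)}
    (hd : Disjoint B1 B2) (h1 : IsBranching B1) (h2 : IsBranching B2) {R1 R2 : Finset V}
    (hu : R1 ∪ R2 = rootSet B1 ∪ rootSet B2)
    (hR : ∀ v, IsInSourceComponent (B1 ∪ B2) v →
      (∃ x ∈ R1, arcReach (B1 ∪ B2) x v ∧ arcReach (B1 ∪ B2) v x) ∧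
      (∃ x ∈ R2, arcReach (B1 ∪ B2) x v ∧ arcReach (B1 ∪ B2) v x)) :
    EdmondsCondition (B1 ∪ B2) R1 R2 := by
  intro U hU
  by_cases hU1 : Disjoint U R1 <;> by_cases hU2 : Disjoint U R2 <;>
    simp only [hU1, hU2, if_true, if_false, add_zero, zero_add, zero_le]
  · have hUB : Disjoint U (rootSet B1) ∧ Disjoint U (rootSet B2) := by
      rw [← disjoint_union_right, ← hu, disjoint_union_right]
      exact ⟨hU1, hU2⟩
    have hdis : Disjoint (enteringArcs B1 U) (enteringArcs B2 U) := disjoint_filter_filter hd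
    rw [enteringArcs_union, card_union_of_disjoint hdis]
    have := (h1.enteringArcs_nonempty hU hUB.1).card_pos
    have := (h2.enteringArcs_nonempty hU hUB.2).card_pos
    omega
  · exact (enteringArcs_nonempty_of_disjoint (fun v hv => (hR v hv).1) hU hU1).card_pos
  · exact (enteringArcs_nonempty_of_disjoint (fun v hv => (hR v hv).2) hU hU2).card_pos

theorem union_eq_of_subset_of_card_rootSet_eq {B1 B2 C1 C2 : Finset (V × V)}
    (hd : Disjoint B1 B2) (hC : Disjoint C1 C2) (h1 : IsBranching B1) (h2 : IsBranching B2)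
    (hc1 : IsBranching C1) (hc2 : IsBranching C2) (hsub : C1 ∪ C2 ⊆ B1 ∪ B2)
    (hcard : #(rootSet C1) + #(rootSet C2) = #(rootSet B1) + #(rootSet B2)) :
    C1 ∪ C2 = B1 ∪ B2 := by
  refine eq_of_subset_of_card_le hsub ?_
  rw [card_union_of_disjoint hd, card_union_of_disjoint hC]
  have := h1.card_add_card_rootSet
  have := h2.card_add_card_rootSet
  have := hc1.card_add_card_rootSet
  have := hc2.card_add_card_rootSet
  omega

theorem branching_root_exchange
    (B1 B2 : Finset (V × V)) (hd : Disjoint B1 B2)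
    (h1 : IsBranching B1) (h2 : IsBranching B2)
    (R1 R2 : Finset V)
    (hu : R1 ∪ R2 = rootSet B1 ∪ rootSet B2)
    (hi : R1 ∩ R2 = rootSet B1 ∩ rootSet B2) :
    (∃ B1' B2' : Finset (V × V), Disjoint B1' B2' ∧ B1' ∪ B2' = B1 ∪ B2 ∧
      IsBranching B1' ∧ IsBranching B2' ∧ rootSet B1' = R1 ∧ rootSet B2' = R2) ↔
    (∀ v : V,
      (∀ a ∈ B1 ∪ B2,
        (arcReach (B1 ∪ B2) a.2 v ∧ arcReach (B1 ∪ B2) v a.2) →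
        (arcReach (B1 ∪ B2) a.1 v ∧ arcReach (B1 ∪ B2) v a.1)) →
      ((∃ x ∈ R1, arcReach (B1 ∪ B2) x v ∧ arcReach (B1 ∪ B2) v x) ∧
       (∃ x ∈ R2, arcReach (B1 ∪ B2) x v ∧ arcReach (B1 ∪ B2) v x))) := by
  constructor
  · rintro ⟨C1, C2, -, hC, hc1, hc2, rfl, rfl⟩ v hv
    exact ⟨hc1.exists_mem_rootSet_of_isInSourceComponent (hC ▸ subset_union_left) hv,
      hc2.exists_mem_rootSet_of_isInSourceComponent (hC ▸ subset_union_right) hv⟩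
  · intro hR
    obtain ⟨C1, C2, hC1, hC2, hC, hc1, hc2, rfl, rfl⟩ :=
      (edmondsCondition_of_forall_isInSourceComponent hd h1 h2 hu hR).exists_disjoint_branchings
    refine ⟨C1, C2, hC, union_eq_of_subset_of_card_rootSet_eq hd hC h1 h2 hc1 hc2
      (union_subset hC1 hC2) ?_, hc1, hc2, rfl, rfl⟩
    rw [← card_union_add_card_inter, hu, hi, card_union_add_card_inter]
end
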